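/- arXiv:2509.26298 — 5 statements merged into one kernel-verified Lean document; each statement's English description precedes it below -/
import Mathlib

section
/- The characteristic polynomial of the quasilinear coefficient matrix M of the two-fluid model factors completely over the reals: for every λ ∈ ℝ, det(M − λ·I₇) = (u − λ)·(u₁ − λ)·((u₁ − λ)² − c₁²)·(u₂ − λ)·((u₂ − λ)² − c₂²). In particular the eigenvalues of M are u, u₁, u₁ ± c₁, u₂, u₂ ± c₂, all real. -/
/-!
`M - λ I₇` is block lower triangular for the splitting `7 = 1 + (3 + 3)`, with diagonal blocks
`u - λ`, `M₁ - λ I₃` and `M₂ - λ I₃`; the coupling columns `z_k` lie below the diagonal and never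
enter the determinant. In each acoustic block `M_k - λ I₃` the off-diagonal entries `1/ρ_k` and
`ρ_k c_k²` multiply to `c_k²`, which gives the factor `(u_k - λ)((u_k - λ)² - c_k²)`.
-/

open Matrix

theorem Matrix.det_of_castAdd_natAdd_eq_zero {R : Type*} [CommRing R] {m n : ℕ}
    (A : Matrix (Fin (m + n)) (Fin (m + n)) R)
    (h : ∀ i j, A (Fin.castAdd n i) (Fin.natAdd m j) = 0) :
    A.det = (A.submatrix (Fin.castAdd n) (Fin.castAdd n)).det *
      (A.submatrix (Fin.natAdd m) (Fin.natAdd m)).det := by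
  have h₁₂ : (reindex finSumFinEquiv.symm finSumFinEquiv.symm A).toBlocks₁₂ = 0 := by
    ext i j
    exact h i j
  rw [← det_reindex_self finSumFinEquiv.symm, ← fromBlocks_toBlocks (reindex _ _ A), h₁₂,
    det_fromBlocks_zero₁₂]
  rfl

theorem Matrix.det_eq_mul_det_succ_of_row_zero {R : Type*} [CommRing R] {n : ℕ}
    (A : Matrix (Fin (n + 1)) (Fin (n + 1)) R) (h : ∀ j : Fin n, A 0 j.succ = 0) :
    A.det = A 0 0 * (A.submatrix Fin.succ Fin.succ).det := by
  rw [det_succ_row_zero, Fin.sum_univ_succ]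
  simp [h]

def acousticMatrix {K : Type*} [Field K] (ρ c v : K) : Matrix (Fin 3) (Fin 3) K :=
  !![v, 1 / ρ, 0; ρ * c ^ 2, v, 0; 0, 0, v]

theorem det_acousticMatrix_sub_smul {K : Type*} [Field K] {ρ : K} (hρ : ρ ≠ 0) (c v lam : K) :
    (acousticMatrix ρ c v - lam • 1).det = (v - lam) * ((v - lam) ^ 2 - c ^ 2) := by
  simp [acousticMatrix, det_fin_three]
  field_simp

theorem char_poly_factors_completely_general
    (α₁ ρ₁ ρ₂ c₁ c₂ u₁ u₂ p₁ p₂ : ℝ)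
    (hρ₁ : 0 < ρ₁) (hρ₂ : 0 < ρ₂)
    (α₂ ρ u : ℝ)
    (M : Matrix (Fin 7) (Fin 7) ℝ)
    (hM : M = !![u, 0, 0, 0, 0, 0, 0;
                 (p₁ - p₂) / ρ, u₁, 1 / ρ₁, 0, 0, 0, 0;
                 -(ρ₁ * c₁ ^ 2 / α₁) * (u - u₁), ρ₁ * c₁ ^ 2, u₁, 0, 0, 0, 0;
                 0, 0, 0, u₁, 0, 0, 0;
                 (p₁ - p₂) / ρ, 0, 0, 0, u₂, 1 / ρ₂, 0;
                 (ρ₂ * c₂ ^ 2 / α₂) * (u - u₂), 0, 0, 0, ρ₂ * c₂ ^ 2, u₂, 0;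
                 0, 0, 0, 0, 0, 0, u₂]) :
    ∀ lam : ℝ, (M - lam • (1 : Matrix (Fin 7) (Fin 7) ℝ)).det =
      (u - lam) * (u₁ - lam) * ((u₁ - lam) ^ 2 - c₁ ^ 2) *
      (u₂ - lam) * ((u₂ - lam) ^ 2 - c₂ ^ 2) := by
  intro lam
  set N := M - lam • (1 : Matrix (Fin 7) (Fin 7) ℝ) with hN
  subst hM
  set N' := N.submatrix Fin.succ Fin.succ
  calc N.det
      = (u - lam) * N'.det := by
        rw [det_eq_mul_det_succ_of_row_zero N (by intro j; fin_cases j <;> simp [hN]),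
          show N 0 0 = u - lam by simp [hN]]
    _ = (u - lam) * ((N'.submatrix (Fin.castAdd 3) (Fin.castAdd 3)).det *
          (N'.submatrix (Fin.natAdd (m := 3) 3) (Fin.natAdd 3)).det) := by
        rw [det_of_castAdd_natAdd_eq_zero (m := 3) (n := 3) N' (by
          intro i j; fin_cases i <;> fin_cases j <;> simp [N', hN])]
    _ = (u - lam) * ((acousticMatrix ρ₁ c₁ u₁ - lam • 1).det *
          (acousticMatrix ρ₂ c₂ u₂ - lam • 1).det) := by
        congr 3 <;> ext i j <;> fin_cases i <;> fin_cases j <;> simp [N', hN, acousticMatrix]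
    _ = _ := by
        rw [det_acousticMatrix_sub_smul hρ₁.ne', det_acousticMatrix_sub_smul hρ₂.ne']
        ring

/-- The characteristic polynomial of the quasilinear coefficient matrix `M` of the
two-fluid model factors completely over the reals. -/
theorem char_poly_factors_completely
    (α₁ ρ₁ ρ₂ c₁ c₂ u₁ u₂ p₁ p₂ : ℝ)
    (hα₁ : 0 < α₁) (hα₁' : α₁ < 1)
    (hρ₁ : 0 < ρ₁) (hρ₂ : 0 < ρ₂) (hc₁ : 0 < c₁) (hc₂ : 0 < c₂)
    (α₂ m₁ m₂ ρ Y₁ Y₂ u : ℝ)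
    (hα₂ : α₂ = 1 - α₁) (hm₁ : m₁ = α₁ * ρ₁) (hm₂ : m₂ = α₂ * ρ₂)
    (hρ : ρ = m₁ + m₂) (hY₁ : Y₁ = m₁ / ρ) (hY₂ : Y₂ = m₂ / ρ)
    (hu : u = Y₁ * u₁ + Y₂ * u₂)
    (M : Matrix (Fin 7) (Fin 7) ℝ)
    (hM : M = !![u, 0, 0, 0, 0, 0, 0;
                 (p₁ - p₂) / ρ, u₁, 1 / ρ₁, 0, 0, 0, 0;
                 -(ρ₁ * c₁ ^ 2 / α₁) * (u - u₁), ρ₁ * c₁ ^ 2, u₁, 0, 0, 0, 0;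
                 0, 0, 0, u₁, 0, 0, 0;
                 (p₁ - p₂) / ρ, 0, 0, 0, u₂, 1 / ρ₂, 0;
                 (ρ₂ * c₂ ^ 2 / α₂) * (u - u₂), 0, 0, 0, ρ₂ * c₂ ^ 2, u₂, 0;
                 0, 0, 0, 0, 0, 0, u₂]) :
    ∀ lam : ℝ, (M - lam • (1 : Matrix (Fin 7) (Fin 7) ℝ)).det =
      (u - lam) * (u₁ - lam) * ((u₁ - lam) ^ 2 - c₁ ^ 2) *
      (u₂ - lam) * ((u₂ - lam) ^ 2 - c₂ ^ 2) :=
  char_poly_factors_completely_general α₁ ρ₁ ρ₂ c₁ c₂ u₁ u₂ p₁ p₂ hρ₁ hρ₂ α₂ ρ u M hM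
end

section
/- Under the non-resonance condition (u − u₁)² ≠ c₁² and (u − u₂)² ≠ c₂², the explicit matrix R of candidate eigenvectors satisfies M·R = R·D, where D = diag(u, u₁+c₁, u₁−c₁, u₁, u₂+c₂, u₂−c₂, u₂); i.e., each column of R is an eigenvector of M for the corresponding eigenvalue. -/
/-!
The matrix is lower block triangular: after the scalar `α₁`-equation come two decoupled phase
blocks, each an acoustic block `A_k = [[u_k, 1/ρ_k], [ρ_k c_k², u_k]]` together with a transported
entropy, so columns 2–7 of `R` are the acoustic and entropy eigenvectors of these blocks. In the
first column, the eigenvector for `u`, the velocity and pressure entries of phase `k` solve the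
2×2 system `(A_k - u) (a, b) = -z_k`, which is uniquely solvable exactly when
`Δ_k = (u_k - u)² - c_k² ≠ 0`. Both phases are one computation once phase 2 is written with the
signed volume fraction `-α₂` in place of `α₁`, and the relative velocities through `W`:
`u₁ - u = Y₂ W`, `u₂ - u = -Y₁ W`.
-/

open Matrix

theorem acoustic_block_resolvent_solution {ρk c v lam w β P Δ a b : ℝ} (hρk : ρk ≠ 0)
    (hw : v - lam = w) (hΔ : Δ = (v - lam) ^ 2 - c ^ 2) (hres : (lam - v) ^ 2 ≠ c ^ 2)
    (ha : a = -w / Δ * (P - c ^ 2 / β)) (hb : b = ρk * c ^ 2 / Δ * (P - w ^ 2 / β)) :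
    P + v * a + 1 / ρk * b = lam * a ∧
      -(ρk * c ^ 2 / β) * (lam - v) + ρk * c ^ 2 * a + v * b = lam * b := by
  have hΔ0 : (v - lam) ^ 2 - c ^ 2 ≠ 0 := by
    rw [sub_ne_zero, ← neg_sub, neg_sq]
    exact hres
  subst hw hΔ ha hb
  constructor <;> field_simp <;> ring

theorem eigenvector_matrix_relation_general
    (α₁ ρ₁ ρ₂ c₁ c₂ u₁ u₂ p₁ p₂ : ℝ)
    (hα₁ : 0 < α₁) (hα₁' : α₁ < 1)
    (hρ₁ : 0 < ρ₁) (hρ₂ : 0 < ρ₂)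
    (α₂ m₁ m₂ ρ Y₁ Y₂ u W Δ₁ Δ₂ : ℝ)
    (hα₂ : α₂ = 1 - α₁) (hm₁ : m₁ = α₁ * ρ₁) (hm₂ : m₂ = α₂ * ρ₂)
    (hρ : ρ = m₁ + m₂) (hY₁ : Y₁ = m₁ / ρ) (hY₂ : Y₂ = m₂ / ρ)
    (hu : u = Y₁ * u₁ + Y₂ * u₂) (hW : W = u₁ - u₂)
    (hΔ₁ : Δ₁ = (u₁ - u) ^ 2 - c₁ ^ 2) (hΔ₂ : Δ₂ = (u₂ - u) ^ 2 - c₂ ^ 2)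
    (hres₁ : (u - u₁) ^ 2 ≠ c₁ ^ 2) (hres₂ : (u - u₂) ^ 2 ≠ c₂ ^ 2)
    (M R D : Matrix (Fin 7) (Fin 7) ℝ)
    (hM : M = !![u, 0, 0, 0, 0, 0, 0;
                 (p₁ - p₂) / ρ, u₁, 1 / ρ₁, 0, 0, 0, 0;
                 -(ρ₁ * c₁ ^ 2 / α₁) * (u - u₁), ρ₁ * c₁ ^ 2, u₁, 0, 0, 0, 0;
                 0, 0, 0, u₁, 0, 0, 0;
                 (p₁ - p₂) / ρ, 0, 0, 0, u₂, 1 / ρ₂, 0;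
                 (ρ₂ * c₂ ^ 2 / α₂) * (u - u₂), 0, 0, 0, ρ₂ * c₂ ^ 2, u₂, 0;
                 0, 0, 0, 0, 0, 0, u₂])
    (hR : R = !![1, 0, 0, 0, 0, 0, 0;
                 (-Y₂ * W / Δ₁) * ((p₁ - p₂) / ρ - c₁ ^ 2 / α₁), 1, 1, 0, 0, 0, 0;
                 (ρ₁ * c₁ ^ 2 / Δ₁) * ((p₁ - p₂) / ρ - Y₂ ^ 2 * W ^ 2 / α₁),
                   ρ₁ * c₁, -(ρ₁ * c₁), 0, 0, 0, 0;
                 0, 0, 0, 1, 0, 0, 0;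
                 (Y₁ * W / Δ₂) * ((p₁ - p₂) / ρ + c₂ ^ 2 / α₂), 0, 0, 0, 1, 1, 0;
                 (ρ₂ * c₂ ^ 2 / Δ₂) * ((p₁ - p₂) / ρ + Y₁ ^ 2 * W ^ 2 / α₂),
                   0, 0, 0, ρ₂ * c₂, -(ρ₂ * c₂), 0;
                 0, 0, 0, 0, 0, 0, 1])
    (hD : D = Matrix.diagonal ![u, u₁ + c₁, u₁ - c₁, u₁, u₂ + c₂, u₂ - c₂, u₂]) :
    M * R = R * D := by
  have hρ0 : ρ ≠ 0 := by
    have : 0 < 1 - α₁ := sub_pos.2 hα₁'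
    rw [hρ, hm₁, hm₂, hα₂]
    positivity
  have hY : Y₁ + Y₂ = 1 := by rw [hY₁, hY₂, ← add_div, ← hρ, div_self hρ0]
  have hw₁ : u₁ - u = Y₂ * W := by rw [hu, hW]; linear_combination (-u₁) * hY
  have hw₂ : u₂ - u = -(Y₁ * W) := by rw [hu, hW]; linear_combination (-u₂) * hY
  obtain ⟨row₁, row₂⟩ := acoustic_block_resolvent_solution (P := (p₁ - p₂) / ρ) (β := α₁)
    hρ₁.ne' hw₁ hΔ₁ hres₁ rfl rfl
  obtain ⟨row₄, row₅⟩ := acoustic_block_resolvent_solution (P := (p₁ - p₂) / ρ) (β := -α₂)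
    hρ₂.ne' hw₂ hΔ₂ hres₂ rfl rfl
  subst hM hR hD
  ext i j
  rw [mul_diagonal]
  fin_cases j <;> fin_cases i <;> simp only [mul_apply, Fin.sum_univ_seven, of_apply, cons_val',
    cons_val, cons_val_zero, cons_val_one, cons_val_fin_one, Fin.isValue, Fin.zero_eta,
    Fin.reduceFinMk, Fin.mk_one, Nat.succ_eq_add_one, Nat.reduceAdd, one_div, mul_zero, zero_mul,
    mul_one, one_mul, add_zero, zero_add, mul_neg, neg_mul, neg_zero, add_right_inj]
  · linear_combination row₁
  · linear_combination row₂
  · linear_combination row₄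
  · linear_combination row₅
  -- what is left: `A_k (1, ±ρ_k c_k) = (u_k ± c_k) (1, ±ρ_k c_k)` for the acoustic blocks
  all_goals field_simp
  all_goals ring

/-- Under the non-resonance condition, the explicit matrix `R` of candidate
eigenvectors satisfies `M * R = R * D` with `D` diagonal, i.e. each column of `R`
is an eigenvector of `M` for the corresponding eigenvalue. -/
theorem eigenvector_matrix_relation
    (α₁ ρ₁ ρ₂ c₁ c₂ u₁ u₂ p₁ p₂ : ℝ)
    (hα₁ : 0 < α₁) (hα₁' : α₁ < 1)
    (hρ₁ : 0 < ρ₁) (hρ₂ : 0 < ρ₂) (hc₁ : 0 < c₁) (hc₂ : 0 < c₂)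
    (α₂ m₁ m₂ ρ Y₁ Y₂ u W Δ₁ Δ₂ : ℝ)
    (hα₂ : α₂ = 1 - α₁) (hm₁ : m₁ = α₁ * ρ₁) (hm₂ : m₂ = α₂ * ρ₂)
    (hρ : ρ = m₁ + m₂) (hY₁ : Y₁ = m₁ / ρ) (hY₂ : Y₂ = m₂ / ρ)
    (hu : u = Y₁ * u₁ + Y₂ * u₂) (hW : W = u₁ - u₂)
    (hΔ₁ : Δ₁ = (u₁ - u) ^ 2 - c₁ ^ 2) (hΔ₂ : Δ₂ = (u₂ - u) ^ 2 - c₂ ^ 2)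
    (hres₁ : (u - u₁) ^ 2 ≠ c₁ ^ 2) (hres₂ : (u - u₂) ^ 2 ≠ c₂ ^ 2)
    (M R D : Matrix (Fin 7) (Fin 7) ℝ)
    (hM : M = !![u, 0, 0, 0, 0, 0, 0;
                 (p₁ - p₂) / ρ, u₁, 1 / ρ₁, 0, 0, 0, 0;
                 -(ρ₁ * c₁ ^ 2 / α₁) * (u - u₁), ρ₁ * c₁ ^ 2, u₁, 0, 0, 0, 0;
                 0, 0, 0, u₁, 0, 0, 0;
                 (p₁ - p₂) / ρ, 0, 0, 0, u₂, 1 / ρ₂, 0;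
                 (ρ₂ * c₂ ^ 2 / α₂) * (u - u₂), 0, 0, 0, ρ₂ * c₂ ^ 2, u₂, 0;
                 0, 0, 0, 0, 0, 0, u₂])
    (hR : R = !![1, 0, 0, 0, 0, 0, 0;
                 (-Y₂ * W / Δ₁) * ((p₁ - p₂) / ρ - c₁ ^ 2 / α₁), 1, 1, 0, 0, 0, 0;
                 (ρ₁ * c₁ ^ 2 / Δ₁) * ((p₁ - p₂) / ρ - Y₂ ^ 2 * W ^ 2 / α₁),
                   ρ₁ * c₁, -(ρ₁ * c₁), 0, 0, 0, 0;
                 0, 0, 0, 1, 0, 0, 0;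
                 (Y₁ * W / Δ₂) * ((p₁ - p₂) / ρ + c₂ ^ 2 / α₂), 0, 0, 0, 1, 1, 0;
                 (ρ₂ * c₂ ^ 2 / Δ₂) * ((p₁ - p₂) / ρ + Y₁ ^ 2 * W ^ 2 / α₂),
                   0, 0, 0, ρ₂ * c₂, -(ρ₂ * c₂), 0;
                 0, 0, 0, 0, 0, 0, 1])
    (hD : D = Matrix.diagonal ![u, u₁ + c₁, u₁ - c₁, u₁, u₂ + c₂, u₂ - c₂, u₂]) :
    M * R = R * D :=
  eigenvector_matrix_relation_general α₁ ρ₁ ρ₂ c₁ c₂ u₁ u₂ p₁ p₂ hα₁ hα₁' hρ₁ hρ₂ α₂ m₁ m₂ ρ Y₁ Y₂ u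
    W Δ₁ Δ₂ hα₂ hm₁ hm₂ hρ hY₁ hY₂ hu hW hΔ₁ hΔ₂ hres₁ hres₂ M R D hM hR hD
end

section
/- The determinant of the explicit eigenvector matrix R equals 4·ρ₁c₁·ρ₂c₂; since ρ₁, ρ₂, c₁, c₂ > 0, R is invertible, so its columns form a basis of ℝ⁷. -/
/-!
The first row of `R` is the first unit vector, so expanding along it discards the first column,
the only one that depends on `α`, `Y`, `W`, `Δ` and the pressures. What remains is block
diagonal with blocks `!![1, 1; ρ₁c₁, -ρ₁c₁]`, `1`, `!![1, 1; ρ₂c₂, -ρ₂c₂]`, `1`, whose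
determinant is `(-2ρ₁c₁)(-2ρ₂c₂)`.
-/

open Matrix

theorem det_eigenvectorMatrix_shape {R : Type*} [CommRing R] (a b d e x y : R) :
    !![1, 0, 0, 0, 0, 0, 0;
       a, 1, 1, 0, 0, 0, 0;
       b, x, -x, 0, 0, 0, 0;
       0, 0, 0, 1, 0, 0, 0;
       d, 0, 0, 0, 1, 1, 0;
       e, 0, 0, 0, y, -y, 0;
       0, 0, 0, 0, 0, 0, 1].det = 4 * x * y := by
  simp [det_succ_row_zero, Fin.sum_univ_succ, Fin.succAbove]
  ring

theorem eigenvector_matrix_det_general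
    (α₁ ρ₁ ρ₂ c₁ c₂ p₁ p₂ : ℝ)
    (hρ₁ : 0 < ρ₁) (hρ₂ : 0 < ρ₂) (hc₁ : 0 < c₁) (hc₂ : 0 < c₂)
    (α₂ ρ Y₁ Y₂ W Δ₁ Δ₂ : ℝ)
    (R : Matrix (Fin 7) (Fin 7) ℝ)
    (hR : R = !![1, 0, 0, 0, 0, 0, 0;
                 (-Y₂ * W / Δ₁) * ((p₁ - p₂) / ρ - c₁ ^ 2 / α₁), 1, 1, 0, 0, 0, 0;
                 (ρ₁ * c₁ ^ 2 / Δ₁) * ((p₁ - p₂) / ρ - Y₂ ^ 2 * W ^ 2 / α₁),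
                   ρ₁ * c₁, -(ρ₁ * c₁), 0, 0, 0, 0;
                 0, 0, 0, 1, 0, 0, 0;
                 (Y₁ * W / Δ₂) * ((p₁ - p₂) / ρ + c₂ ^ 2 / α₂), 0, 0, 0, 1, 1, 0;
                 (ρ₂ * c₂ ^ 2 / Δ₂) * ((p₁ - p₂) / ρ + Y₁ ^ 2 * W ^ 2 / α₂),
                   0, 0, 0, ρ₂ * c₂, -(ρ₂ * c₂), 0;
                 0, 0, 0, 0, 0, 0, 1]) :
    R.det = 4 * (ρ₁ * c₁) * (ρ₂ * c₂) ∧ IsUnit R.det ∧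
      LinearIndependent ℝ (fun j : Fin 7 => (R.transpose j : Fin 7 → ℝ)) := by
  have hdet : R.det = 4 * (ρ₁ * c₁) * (ρ₂ * c₂) := by
    rw [hR, det_eigenvectorMatrix_shape]
  have hne : R.det ≠ 0 := by
    rw [hdet]
    positivity
  exact ⟨hdet, hne.isUnit, linearIndependent_cols_of_det_ne_zero hne⟩

/-- The determinant of the explicit eigenvector matrix `R` equals `4 ρ₁ c₁ ρ₂ c₂`;
since `ρ₁, ρ₂, c₁, c₂ > 0`, `R` is invertible, so its columns form a basis of `ℝ⁷`. -/
theorem eigenvector_matrix_det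
    (α₁ ρ₁ ρ₂ c₁ c₂ u₁ u₂ p₁ p₂ : ℝ)
    (hα₁ : 0 < α₁) (hα₁' : α₁ < 1)
    (hρ₁ : 0 < ρ₁) (hρ₂ : 0 < ρ₂) (hc₁ : 0 < c₁) (hc₂ : 0 < c₂)
    (α₂ m₁ m₂ ρ Y₁ Y₂ u W Δ₁ Δ₂ : ℝ)
    (hα₂ : α₂ = 1 - α₁) (hm₁ : m₁ = α₁ * ρ₁) (hm₂ : m₂ = α₂ * ρ₂)
    (hρ : ρ = m₁ + m₂) (hY₁ : Y₁ = m₁ / ρ) (hY₂ : Y₂ = m₂ / ρ)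
    (hu : u = Y₁ * u₁ + Y₂ * u₂) (hW : W = u₁ - u₂)
    (hΔ₁ : Δ₁ = (u₁ - u) ^ 2 - c₁ ^ 2) (hΔ₂ : Δ₂ = (u₂ - u) ^ 2 - c₂ ^ 2)
    (hΔ₁0 : Δ₁ ≠ 0) (hΔ₂0 : Δ₂ ≠ 0)
    (R : Matrix (Fin 7) (Fin 7) ℝ)
    (hR : R = !![1, 0, 0, 0, 0, 0, 0;
                 (-Y₂ * W / Δ₁) * ((p₁ - p₂) / ρ - c₁ ^ 2 / α₁), 1, 1, 0, 0, 0, 0;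
                 (ρ₁ * c₁ ^ 2 / Δ₁) * ((p₁ - p₂) / ρ - Y₂ ^ 2 * W ^ 2 / α₁),
                   ρ₁ * c₁, -(ρ₁ * c₁), 0, 0, 0, 0;
                 0, 0, 0, 1, 0, 0, 0;
                 (Y₁ * W / Δ₂) * ((p₁ - p₂) / ρ + c₂ ^ 2 / α₂), 0, 0, 0, 1, 1, 0;
                 (ρ₂ * c₂ ^ 2 / Δ₂) * ((p₁ - p₂) / ρ + Y₁ ^ 2 * W ^ 2 / α₂),
                   0, 0, 0, ρ₂ * c₂, -(ρ₂ * c₂), 0;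
                 0, 0, 0, 0, 0, 0, 1]) :
    R.det = 4 * (ρ₁ * c₁) * (ρ₂ * c₂) ∧ IsUnit R.det ∧
      LinearIndependent ℝ (fun j : Fin 7 => (R.transpose j : Fin 7 → ℝ)) :=
  eigenvector_matrix_det_general α₁ ρ₁ ρ₂ c₁ c₂ p₁ p₂ hρ₁ hρ₂ hc₁ hc₂ α₂ ρ Y₁ Y₂ W Δ₁ Δ₂ R hR
end

section
/- (Hyperbolicity) Under the non-resonance condition (u − u₁)² ≠ c₁² and (u − u₂)² ≠ c₂², the quasilinear coefficient matrix M of the two-fluid model is diagonalizable over ℝ: there exist an invertible matrix R ∈ Matrix (Fin 7) (Fin 7) ℝ and a diagonal real matrix D such that M = R·D·R⁻¹, with diagonal entries u, u₁+c₁, u₁−c₁, u₁, u₂+c₂, u₂−c₂, u₂. -/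
open Matrix

set_option maxHeartbeats 0 in
/-- (Hyperbolicity) Under the non-resonance condition, the quasilinear coefficient
matrix `M` of the two-fluid model is diagonalizable over `ℝ` with real eigenvalues
`u, u₁ + c₁, u₁ - c₁, u₁, u₂ + c₂, u₂ - c₂, u₂`. -/
theorem two_fluid_model_hyperbolic
    (α₁ ρ₁ ρ₂ c₁ c₂ u₁ u₂ p₁ p₂ : ℝ)
    (hα₁ : 0 < α₁) (hα₁' : α₁ < 1)
    (hρ₁ : 0 < ρ₁) (hρ₂ : 0 < ρ₂) (hc₁ : 0 < c₁) (hc₂ : 0 < c₂)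
    (α₂ m₁ m₂ ρ Y₁ Y₂ u : ℝ)
    (hα₂ : α₂ = 1 - α₁) (hm₁ : m₁ = α₁ * ρ₁) (hm₂ : m₂ = α₂ * ρ₂)
    (hρ : ρ = m₁ + m₂) (hY₁ : Y₁ = m₁ / ρ) (hY₂ : Y₂ = m₂ / ρ)
    (hu : u = Y₁ * u₁ + Y₂ * u₂)
    (hres₁ : (u - u₁) ^ 2 ≠ c₁ ^ 2) (hres₂ : (u - u₂) ^ 2 ≠ c₂ ^ 2)
    (M : Matrix (Fin 7) (Fin 7) ℝ)
    (hM : M = !![u, 0, 0, 0, 0, 0, 0;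
                 (p₁ - p₂) / ρ, u₁, 1 / ρ₁, 0, 0, 0, 0;
                 -(ρ₁ * c₁ ^ 2 / α₁) * (u - u₁), ρ₁ * c₁ ^ 2, u₁, 0, 0, 0, 0;
                 0, 0, 0, u₁, 0, 0, 0;
                 (p₁ - p₂) / ρ, 0, 0, 0, u₂, 1 / ρ₂, 0;
                 (ρ₂ * c₂ ^ 2 / α₂) * (u - u₂), 0, 0, 0, ρ₂ * c₂ ^ 2, u₂, 0;
                 0, 0, 0, 0, 0, 0, u₂]) :
    ∃ R : Matrix (Fin 7) (Fin 7) ℝ, IsUnit R.det ∧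
      M = R * Matrix.diagonal ![u, u₁ + c₁, u₁ - c₁, u₁, u₂ + c₂, u₂ - c₂, u₂] * R⁻¹ := by
  have hρ₁' : ρ₁ ≠ 0 := ne_of_gt hρ₁
  have hρ₂' : ρ₂ ≠ 0 := ne_of_gt hρ₂
  have hc₁' : c₁ ≠ 0 := ne_of_gt hc₁
  have hc₂' : c₂ ≠ 0 := ne_of_gt hc₂
  have hα₁ne : α₁ ≠ 0 := ne_of_gt hα₁
  have hα₂ne : α₂ ≠ 0 := by rw [hα₂]; intro h; linarith
  have hρne : ρ ≠ 0 := by rw [hρ, hm₁, hm₂, hα₂]; nlinarith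
  have hD₁ : (u - u₁) ^ 2 - c₁ ^ 2 ≠ 0 := sub_ne_zero.mpr hres₁
  have hD₂ : (u - u₂) ^ 2 - c₂ ^ 2 ≠ 0 := sub_ne_zero.mpr hres₂
  obtain ⟨A₁, hA₁⟩ : ∃ x : ℝ, x = -((u₁ - u) * ((p₁ - p₂) / ρ) -
      (-(ρ₁ * c₁ ^ 2 / α₁) * (u - u₁)) / ρ₁) / ((u - u₁) ^ 2 - c₁ ^ 2) := ⟨_, rfl⟩
  obtain ⟨B₁, hB₁⟩ : ∃ x : ℝ, x = -(-(ρ₁ * c₁ ^ 2) * ((p₁ - p₂) / ρ) +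
      (u₁ - u) * (-(ρ₁ * c₁ ^ 2 / α₁) * (u - u₁))) / ((u - u₁) ^ 2 - c₁ ^ 2) := ⟨_, rfl⟩
  obtain ⟨A₂, hA₂⟩ : ∃ x : ℝ, x = -((u₂ - u) * ((p₁ - p₂) / ρ) -
      ((ρ₂ * c₂ ^ 2 / α₂) * (u - u₂)) / ρ₂) / ((u - u₂) ^ 2 - c₂ ^ 2) := ⟨_, rfl⟩
  obtain ⟨B₂, hB₂⟩ : ∃ x : ℝ, x = -(-(ρ₂ * c₂ ^ 2) * ((p₁ - p₂) / ρ) +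
      (u₂ - u) * ((ρ₂ * c₂ ^ 2 / α₂) * (u - u₂))) / ((u - u₂) ^ 2 - c₂ ^ 2) := ⟨_, rfl⟩
  have hE1 : (p₁ - p₂) / ρ + u₁ * A₁ + B₁ / ρ₁ = A₁ * u := by
    rw [hA₁, hB₁]; field_simp; ring
  have hE2 : -(ρ₁ * c₁ ^ 2 / α₁) * (u - u₁) + ρ₁ * c₁ ^ 2 * A₁ + u₁ * B₁ = B₁ * u := by
    rw [hA₁, hB₁]; field_simp; ring
  have hE3 : (p₁ - p₂) / ρ + u₂ * A₂ + B₂ / ρ₂ = A₂ * u := by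
    rw [hA₂, hB₂]; field_simp; ring
  have hE4 : (ρ₂ * c₂ ^ 2 / α₂) * (u - u₂) + ρ₂ * c₂ ^ 2 * A₂ + u₂ * B₂ = B₂ * u := by
    rw [hA₂, hB₂]; field_simp; ring
  obtain ⟨R, hRdef⟩ : ∃ X : Matrix (Fin 7) (Fin 7) ℝ,
      X = !![(1:ℝ),0,0,0,0,0,0;
             A₁,1,1,0,0,0,0;
             B₁,ρ₁*c₁,-(ρ₁*c₁),0,0,0,0;
             0,0,0,1,0,0,0;
             A₂,0,0,0,1,1,0;
             B₂,0,0,0,ρ₂*c₂,-(ρ₂*c₂),0;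
             0,0,0,0,0,0,1] := ⟨_, rfl⟩
  obtain ⟨S, hSdef⟩ : ∃ X : Matrix (Fin 7) (Fin 7) ℝ,
      X = !![(1:ℝ),0,0,0,0,0,0;
             -(A₁/2+B₁/(2*(ρ₁*c₁))),1/2,1/(2*(ρ₁*c₁)),0,0,0,0;
             -(A₁/2-B₁/(2*(ρ₁*c₁))),1/2,-(1/(2*(ρ₁*c₁))),0,0,0,0;
             0,0,0,1,0,0,0;
             -(A₂/2+B₂/(2*(ρ₂*c₂))),0,0,0,1/2,1/(2*(ρ₂*c₂)),0;
             -(A₂/2-B₂/(2*(ρ₂*c₂))),0,0,0,1/2,-(1/(2*(ρ₂*c₂))),0;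
             0,0,0,0,0,0,1] := ⟨_, rfl⟩
  have hRS : R * S = 1 := by
    rw [hRdef, hSdef]
    ext i j
    fin_cases i <;> fin_cases j <;>
      · simp only [Matrix.mul_apply, Fin.sum_univ_succ, Finset.univ_unique,
          Fin.default_eq_zero, Finset.sum_singleton, Fin.sum_univ_zero,
          Matrix.cons_val_zero, Matrix.cons_val_one, Matrix.head_cons,
          Matrix.cons_val_succ, Matrix.of_apply, Matrix.cons_val', Matrix.empty_val',
          Matrix.cons_val_fin_one, Matrix.head_fin_const, Fin.succ_zero_eq_one,
          Matrix.one_apply, add_zero, zero_add, mul_zero, zero_mul, mul_one, one_mul]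
        norm_num [Fin.ext_iff]
        try field_simp
        try ring
  have hdet : IsUnit R.det := Matrix.isUnit_det_of_right_inverse hRS
  have hinv : R⁻¹ = S := Matrix.inv_eq_right_inv hRS
  have hMR : M * R = R * Matrix.diagonal ![u, u₁ + c₁, u₁ - c₁, u₁, u₂ + c₂, u₂ - c₂, u₂] := by
    rw [hM, hRdef]
    ext i j
    fin_cases i <;> fin_cases j <;>
      · simp only [Matrix.mul_apply, Matrix.mul_diagonal, Fin.sum_univ_succ,
          Finset.univ_unique, Fin.default_eq_zero, Finset.sum_singleton, Fin.sum_univ_zero,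
          Matrix.cons_val_zero, Matrix.cons_val_one, Matrix.head_cons,
          Matrix.cons_val_succ, Matrix.of_apply, Matrix.cons_val', Matrix.empty_val',
          Matrix.cons_val_fin_one, Matrix.head_fin_const, Fin.succ_zero_eq_one,
          Matrix.diagonal_apply, add_zero, zero_add, mul_zero, zero_mul, mul_one, one_mul]
        try norm_num [Fin.ext_iff]
        try norm_num [Fin.ext_iff]
        try (linear_combination hE1)
        try (linear_combination hE2)
        try (linear_combination hE3)
        try (linear_combination hE4)
        try field_simp
        try ring
  refine ⟨R, hdet, ?_⟩
  calc M = M * (R * R⁻¹) := by rw [Matrix.mul_nonsing_inv R hdet, Matrix.mul_one]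
  _ = M * R * R⁻¹ := by rw [Matrix.mul_assoc]
  _ = R * Matrix.diagonal ![u, u₁ + c₁, u₁ - c₁, u₁, u₂ + c₂, u₂ - c₂, u₂] * R⁻¹ := by rw [hMR]
end

section
/- (Riemann invariant of the interfacial wave: mixture total pressure) The quantity φ = α₁p₁ + α₂p₂ + ρY₁Y₂W² is a Riemann invariant of the interfacial wave: its gradient with respect to the variables V = (α₁, u₁, p₁, m₁, u₂, p₂, m₂) is orthogonal to the interfacial eigenvector r; explicitly, (p₁ − p₂)·1 + 2ρY₁Y₂W·r_{u₁} + α₁·r_{p₁} + Y₂²W²·r_{m₁} − 2ρY₁Y₂W·r_{u₂} + α₂·r_{p₂} + Y₁²W²·r_{m₂} = 0. -/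
/-!
The contraction of `∇φ` with `r` splits into one block per phase. Multiplied by `α_k Δ_k`, the
phase-1 block becomes `-ρ Y₁ D α₁ ((u₁ - u)² - c₁²) = -ρ Y₁ D α₁ Δ₁`, using `u₁ - u = Y₂ W` and
`α₁ ρ₁ = ρ Y₁`; so it equals `-ρ Y₁ D`. The phase-2 block is the phase-1 block with the phases
exchanged (`W ↦ -W`, `D ↦ -D`) and the sign flipped, since `α₂` decreases along `r`; it equals
`-ρ Y₂ D`. Their sum `-ρ D (Y₁ + Y₂) = -(p₁ - p₂)` cancels the `α₁`-component.
-/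

theorem phase_block_contraction (ρ ρk α c Y Y' w d Δ : ℝ) (hα : α ≠ 0)
    (hΔ : Δ = Y' ^ 2 * w ^ 2 - c ^ 2) (hΔ0 : Δ ≠ 0) (hmass : α * ρk = ρ * Y) :
    2 * ρ * Y * Y' * w * ((-Y' * w / Δ) * (d - c ^ 2 / α))
      + α * ((ρk * c ^ 2 / Δ) * (d - Y' ^ 2 * w ^ 2 / α))
      + Y' ^ 2 * w ^ 2 * ((ρ * Y / Δ) * (d - c ^ 2 / α)) = -(ρ * Y * d) := by
  field_simp
  linear_combination (c ^ 2 * (d * α - Y' ^ 2 * w ^ 2)) * hmass + (ρ * Y * d * α) * hΔ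

theorem riemann_invariant_mixture_total_pressure_general
    (α₁ ρ₁ ρ₂ c₁ c₂ u₁ u₂ p₁ p₂ : ℝ)
    (hα₁ : 0 < α₁) (hα₁' : α₁ < 1)
    (hρ₁ : 0 < ρ₁) (hρ₂ : 0 < ρ₂)
    (α₂ m₁ m₂ ρ Y₁ Y₂ u W Δ₁ Δ₂ D A₁ A₂ : ℝ)
    (hα₂ : α₂ = 1 - α₁) (hm₁ : m₁ = α₁ * ρ₁) (hm₂ : m₂ = α₂ * ρ₂)
    (hρ : ρ = m₁ + m₂) (hY₁ : Y₁ = m₁ / ρ) (hY₂ : Y₂ = m₂ / ρ)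
    (hu : u = Y₁ * u₁ + Y₂ * u₂) (hW : W = u₁ - u₂)
    (hΔ₁ : Δ₁ = (u₁ - u) ^ 2 - c₁ ^ 2) (hΔ₂ : Δ₂ = (u₂ - u) ^ 2 - c₂ ^ 2)
    (hΔ₁0 : Δ₁ ≠ 0) (hΔ₂0 : Δ₂ ≠ 0)
    (hD : D = (p₁ - p₂) / ρ) (hA₁ : A₁ = D - c₁ ^ 2 / α₁) (hA₂ : A₂ = D + c₂ ^ 2 / α₂)
    (ru₁ rp₁ rm₁ ru₂ rp₂ rm₂ : ℝ)
    (hru₁ : ru₁ = (-Y₂ * W / Δ₁) * A₁)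
    (hrp₁ : rp₁ = (ρ₁ * c₁ ^ 2 / Δ₁) * (D - Y₂ ^ 2 * W ^ 2 / α₁))
    (hrm₁ : rm₁ = (ρ * Y₁ / Δ₁) * A₁)
    (hru₂ : ru₂ = (Y₁ * W / Δ₂) * A₂)
    (hrp₂ : rp₂ = (ρ₂ * c₂ ^ 2 / Δ₂) * (D + Y₁ ^ 2 * W ^ 2 / α₂))
    (hrm₂ : rm₂ = (ρ * Y₂ / Δ₂) * A₂) :
    (p₁ - p₂) * 1 + 2 * ρ * Y₁ * Y₂ * W * ru₁ + α₁ * rp₁ + Y₂ ^ 2 * W ^ 2 * rm₁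
      - 2 * ρ * Y₁ * Y₂ * W * ru₂ + α₂ * rp₂ + Y₁ ^ 2 * W ^ 2 * rm₂ = 0 := by
  have hα₂pos : 0 < α₂ := by linarith
  have hρ0 : ρ ≠ 0 := by rw [hρ, hm₁, hm₂]; positivity
  have hY : Y₁ + Y₂ = 1 := by rw [hY₁, hY₂, ← add_div, ← hρ, div_self hρ0]
  have hmass₁ : α₁ * ρ₁ = ρ * Y₁ := by rw [hY₁, ← hm₁, mul_div_cancel₀ _ hρ0]
  have hmass₂ : α₂ * ρ₂ = ρ * Y₂ := by rw [hY₂, ← hm₂, mul_div_cancel₀ _ hρ0]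
  have hrel₁ : u₁ - u = Y₂ * W := by rw [hu, hW]; linear_combination (-u₁) * hY
  have hrel₂ : u₂ - u = Y₁ * -W := by rw [hu, hW]; linear_combination (-u₂) * hY
  have hΔ₁' : Δ₁ = Y₂ ^ 2 * W ^ 2 - c₁ ^ 2 := by rw [hΔ₁, hrel₁]; ring
  have hΔ₂' : Δ₂ = Y₁ ^ 2 * (-W) ^ 2 - c₂ ^ 2 := by rw [hΔ₂, hrel₂]; ring
  have hphase₁ := phase_block_contraction ρ ρ₁ α₁ c₁ Y₁ Y₂ W D Δ₁ hα₁.ne' hΔ₁' hΔ₁0 hmass₁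
  have hphase₂ := phase_block_contraction ρ ρ₂ α₂ c₂ Y₂ Y₁ (-W) (-D) Δ₂ hα₂pos.ne' hΔ₂' hΔ₂0 hmass₂
  have hρD : ρ * D = p₁ - p₂ := by rw [hD, mul_div_cancel₀ _ hρ0]
  subst hru₁ hrp₁ hrm₁ hru₂ hrp₂ hrm₂ hA₁ hA₂
  linear_combination hphase₁ - hphase₂ - ρ * D * hY - hρD

/-- (Riemann invariant of the interfacial wave: mixture total pressure) The gradient
of `φ = α₁p₁ + α₂p₂ + ρY₁Y₂W²` with respect to the variables
`V = (α₁, u₁, p₁, m₁, u₂, p₂, m₂)` is orthogonal to the interfacial eigenvector `r`. -/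
theorem riemann_invariant_mixture_total_pressure
    (α₁ ρ₁ ρ₂ c₁ c₂ u₁ u₂ p₁ p₂ : ℝ)
    (hα₁ : 0 < α₁) (hα₁' : α₁ < 1)
    (hρ₁ : 0 < ρ₁) (hρ₂ : 0 < ρ₂) (hc₁ : 0 < c₁) (hc₂ : 0 < c₂)
    (α₂ m₁ m₂ ρ Y₁ Y₂ u W Δ₁ Δ₂ D A₁ A₂ : ℝ)
    (hα₂ : α₂ = 1 - α₁) (hm₁ : m₁ = α₁ * ρ₁) (hm₂ : m₂ = α₂ * ρ₂)
    (hρ : ρ = m₁ + m₂) (hY₁ : Y₁ = m₁ / ρ) (hY₂ : Y₂ = m₂ / ρ)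
    (hu : u = Y₁ * u₁ + Y₂ * u₂) (hW : W = u₁ - u₂)
    (hΔ₁ : Δ₁ = (u₁ - u) ^ 2 - c₁ ^ 2) (hΔ₂ : Δ₂ = (u₂ - u) ^ 2 - c₂ ^ 2)
    (hΔ₁0 : Δ₁ ≠ 0) (hΔ₂0 : Δ₂ ≠ 0)
    (hD : D = (p₁ - p₂) / ρ) (hA₁ : A₁ = D - c₁ ^ 2 / α₁) (hA₂ : A₂ = D + c₂ ^ 2 / α₂)
    (ru₁ rp₁ rm₁ ru₂ rp₂ rm₂ : ℝ)
    (hru₁ : ru₁ = (-Y₂ * W / Δ₁) * A₁)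
    (hrp₁ : rp₁ = (ρ₁ * c₁ ^ 2 / Δ₁) * (D - Y₂ ^ 2 * W ^ 2 / α₁))
    (hrm₁ : rm₁ = (ρ * Y₁ / Δ₁) * A₁)
    (hru₂ : ru₂ = (Y₁ * W / Δ₂) * A₂)
    (hrp₂ : rp₂ = (ρ₂ * c₂ ^ 2 / Δ₂) * (D + Y₁ ^ 2 * W ^ 2 / α₂))
    (hrm₂ : rm₂ = (ρ * Y₂ / Δ₂) * A₂) :
    (p₁ - p₂) * 1 + 2 * ρ * Y₁ * Y₂ * W * ru₁ + α₁ * rp₁ + Y₂ ^ 2 * W ^ 2 * rm₁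
      - 2 * ρ * Y₁ * Y₂ * W * ru₂ + α₂ * rp₂ + Y₁ ^ 2 * W ^ 2 * rm₂ = 0 :=
  riemann_invariant_mixture_total_pressure_general α₁ ρ₁ ρ₂ c₁ c₂ u₁ u₂ p₁ p₂ hα₁ hα₁' hρ₁ hρ₂ α₂ m₁
    m₂ ρ Y₁ Y₂ u W Δ₁ Δ₂ D A₁ A₂ hα₂ hm₁ hm₂ hρ hY₁ hY₂ hu hW hΔ₁ hΔ₂ hΔ₁0 hΔ₂0 hD hA₁ hA₂ ru₁ rp₁
    rm₁ ru₂ rp₂ rm₂ hru₁ hrp₁ hrm₁ hru₂ hrp₂ hrm₂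
end
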